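/- Let X be the 3-dimensional Banach space whose unit ball is the convex hull of ±(1,1,1), ±(−1,1,1), ±(−1,−1,1), ±(1,−1,1), ±(0,0,2). The linear operator T on X defined by T(0,0,2) = (1,0,0), T(1,0,0) = (0,0,0), T(0,1,0) = (0,0,0) has operator norm 1 and numerical radius exactly 1/2. -/

import Mathlib

open Metric Set

/-- The numerical radius of a bounded linear operator. -/
noncomputable def nrad {X : Type*} [NormedAddCommGroup X] [NormedSpace ℝ X]
    (T : X →L[ℝ] X) : ℝ :=
  sSup {r : ℝ | ∃ x : X, ∃ f : X →L[ℝ] ℝ, ‖x‖ = 1 ∧ ‖f‖ = 1 ∧ f x = 1 ∧ r = |f (T x)|}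

/-- The ten vertices ±(1,1,1), ±(−1,1,1), ±(−1,−1,1), ±(1,−1,1), ±(0,0,2). -/
def biPyramidVerts : Set (Fin 3 → ℝ) :=
  {![1,1,1], ![-1,1,1], ![-1,-1,1], ![1,-1,1], ![0,0,2],
   ![-1,-1,-1], ![1,-1,-1], ![1,1,-1], ![-1,1,-1], ![0,0,-2]}

/-!
A functional `v ↦ c ⬝ᵥ v` on `ℝ³` is bounded by `1` on the bipyramid `K = convexHull biPyramidVerts`
iff it is bounded by `1` on the vertices, i.e. iff `max (|c₀| + |c₁| + |c₂|) (2|c₂|) ≤ 1`;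
transporting along `e` identifies the dual unit ball of `X`. Since `T x = (x₂ / 2) u` with
`u = e⁻¹(1,0,0)` of norm one and `|x₂| ≤ 2‖x‖`, we get `‖T‖ ≤ 1`, attained at `x₀ = e⁻¹(0,0,2)`.
The functional `(v₀ + v₂) / 2` supports `K` at `x₀` and takes the value `1/2` at `T x₀`.
Conversely, if `c ⬝ᵥ x = 1` with `x ∈ K` and `c` in the dual ball then `|c₀ x₂| ≤ 1`: either
`|x₂| ≤ 1`, or `|x₀| ≤ 2 - |x₂| < 1` forces `|c₀| ≤ |c₂| ≤ 1/2`.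
-/

open Matrix

theorem abs_le_one_of_mem_convexHull {E : Type*} [AddCommGroup E] [Module ℝ E] {s : Set E}
    {φ : Module.Dual ℝ E} (hφ : ∀ w ∈ s, |φ w| ≤ 1) {v : E} (hv : v ∈ convexHull ℝ s) :
    |φ v| ≤ 1 :=
  abs_le.mpr <| convexHull_min (fun w hw ↦ abs_le.mp (hφ w hw))
    ((convex_Icc (-1 : ℝ) 1).linear_preimage φ) hv

section UnitBallConvexHull

variable {X E : Type*} [NormedAddCommGroup X] [NormedSpace ℝ X] [AddCommGroup E] [Module ℝ E]
  {s : Set E} {e : X ≃ₗ[ℝ] E}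

theorem norm_symm_le_one_of_mem_convexHull (hball : closedBall (0 : X) 1 = e ⁻¹' convexHull ℝ s)
    {v : E} (hv : v ∈ convexHull ℝ s) : ‖e.symm v‖ ≤ 1 := by
  rw [← mem_closedBall_zero_iff, hball, mem_preimage, e.apply_symm_apply]
  exact hv

theorem abs_apply_le_norm_of_forall_mem (hball : closedBall (0 : X) 1 = e ⁻¹' convexHull ℝ s)
    {φ : Module.Dual ℝ E} (hφ : ∀ w ∈ s, |φ w| ≤ 1) (x : X) : |φ (e x)| ≤ ‖x‖ := by
  have := (φ ∘ₗ e.toLinearMap).bound_of_ball_bound' one_pos 1 (fun z hz ↦ by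
    rw [hball] at hz
    exact abs_le_one_of_mem_convexHull hφ hz) x
  simpa using this

theorem exists_strongDual_norm_le_one (hball : closedBall (0 : X) 1 = e ⁻¹' convexHull ℝ s)
    {φ : Module.Dual ℝ E} (hφ : ∀ w ∈ s, |φ w| ≤ 1) :
    ∃ f : StrongDual ℝ X, ‖f‖ ≤ 1 ∧ ∀ x, f x = φ (e x) :=
  ⟨(φ ∘ₗ e.toLinearMap).mkContinuous 1 fun x ↦ by
      simpa using abs_apply_le_norm_of_forall_mem hball hφ x,
    LinearMap.mkContinuous_norm_le _ zero_le_one _, fun _ ↦ rfl⟩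

theorem abs_apply_symm_le_one (hball : closedBall (0 : X) 1 = e ⁻¹' convexHull ℝ s)
    {f : StrongDual ℝ X} (hf : ‖f‖ ≤ 1) {w : E} (hw : w ∈ s) : |f (e.symm w)| ≤ 1 :=
  calc |f (e.symm w)| ≤ ‖f‖ * ‖e.symm w‖ := f.le_opNorm _
    _ ≤ 1 * 1 := by
      gcongr
      exact norm_symm_le_one_of_mem_convexHull hball (subset_convexHull ℝ s hw)
    _ = 1 := one_mul 1

end UnitBallConvexHull

namespace BiPyramid

def dualNorm (c : Fin 3 → ℝ) : ℝ := max (|c 0| + |c 1| + |c 2|) (2 * |c 2|)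

theorem forall_abs_dotProduct_le_one_iff (c : Fin 3 → ℝ) :
    (∀ w ∈ biPyramidVerts, |c ⬝ᵥ w| ≤ 1) ↔ dualNorm c ≤ 1 := by
  simp only [biPyramidVerts, mem_insert_iff, mem_singleton_iff, forall_eq_or_imp, forall_eq,
    dotProduct, Fin.sum_univ_three, Fin.isValue, cons_val_zero, cons_val_one, cons_val, mul_one,
    mul_neg, mul_zero, add_zero, zero_add, abs_mul, Nat.abs_ofNat, abs_neg, dualNorm, sup_le_iff]
  constructor
  · rintro ⟨h₁, h₂, h₃, h₄, h₅, -⟩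
    rw [abs_le] at h₁ h₂ h₃ h₄
    refine ⟨?_, by linarith⟩
    rcases abs_cases (c 0) with ⟨e₀, -⟩ | ⟨e₀, -⟩ <;>
      rcases abs_cases (c 1) with ⟨e₁, -⟩ | ⟨e₁, -⟩ <;>
      rcases abs_cases (c 2) with ⟨e₂, -⟩ | ⟨e₂, -⟩ <;> linarith
  · rintro ⟨h, h₂⟩
    simp only [abs_le]
    constructorm* _ ∧ _ <;>
      linarith [le_abs_self (c 0), neg_abs_le (c 0), le_abs_self (c 1), neg_abs_le (c 1),
        le_abs_self (c 2), neg_abs_le (c 2)]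

theorem abs_dotProduct_le_one_of_mem_convexHull {c v : Fin 3 → ℝ} (hc : dualNorm c ≤ 1)
    (hv : v ∈ convexHull ℝ biPyramidVerts) : |c ⬝ᵥ v| ≤ 1 :=
  abs_le_one_of_mem_convexHull (φ := dotProductEquiv ℝ (Fin 3) c)
    ((forall_abs_dotProduct_le_one_iff c).mpr hc) hv

theorem abs_le_of_mem_convexHull {v : Fin 3 → ℝ} (hv : v ∈ convexHull ℝ biPyramidVerts) :
    |v 0| ≤ 1 ∧ |v 1| ≤ 1 ∧ |v 0| + |v 2| ≤ 2 := by
  have bound := fun c hc ↦ abs_dotProduct_le_one_of_mem_convexHull (c := c) hc hv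
  have h₀ := bound ![1, 0, 0] (by norm_num [dualNorm, cons_val_two, vecHead, vecTail])
  have h₁ := bound ![0, 1, 0] (by norm_num [dualNorm, cons_val_two, vecHead, vecTail])
  have hadd := bound ![1 / 2, 0, 1 / 2] (by norm_num [dualNorm, cons_val_two, vecHead, vecTail])
  have hsub := bound ![1 / 2, 0, -1 / 2] (by norm_num [dualNorm, cons_val_two, vecHead, vecTail])
  simp only [dotProduct, Fin.sum_univ_three, Fin.isValue, cons_val_zero, cons_val_one, cons_val,
    one_mul, zero_mul, add_zero, zero_add] at h₀ h₁ hadd hsub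
  refine ⟨h₀, h₁, ?_⟩
  rw [abs_le] at hadd hsub
  rcases abs_cases (v 0) with ⟨e₀, -⟩ | ⟨e₀, -⟩ <;>
    rcases abs_cases (v 2) with ⟨e₂, -⟩ | ⟨e₂, -⟩ <;> linarith

theorem one_zero_zero_mem_convexHull : ![1, 0, 0] ∈ convexHull ℝ biPyramidVerts := by
  have mem : ∀ w ∈ biPyramidVerts, w ∈ convexHull ℝ biPyramidVerts := subset_convexHull ℝ _
  convert convex_convexHull ℝ biPyramidVerts (mem ![1, 1, 1] (by simp [biPyramidVerts]))
    (mem ![1, -1, -1] (by simp [biPyramidVerts])) (a := 1 / 2) (b := 1 / 2) (by norm_num)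
    (by norm_num) (by norm_num) using 1
  ext i
  fin_cases i <;> norm_num

theorem abs_mul_le_one_of_dotProduct_eq_one {c v : Fin 3 → ℝ} (hc : dualNorm c ≤ 1)
    (hv : v ∈ convexHull ℝ biPyramidVerts) (h : c ⬝ᵥ v = 1) : |c 0 * v 2| ≤ 1 := by
  obtain ⟨hc₀₁₂, hc₂⟩ := max_le_iff.mp hc
  obtain ⟨hv₀, hv₁, hv₀₂⟩ := abs_le_of_mem_convexHull hv
  have le_abs_mul (a b : ℝ) : a * b ≤ |a| * |b| := abs_mul a b ▸ le_abs_self _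
  have hpair : 1 ≤ |c 0| * |v 0| + |c 1| + |c 2| * |v 2| :=
    calc 1 = c 0 * v 0 + c 1 * v 1 + c 2 * v 2 := by
          rw [← h, dotProduct, Fin.sum_univ_three]
      _ ≤ |c 0| * |v 0| + |c 1| * 1 + |c 2| * |v 2| :=
          add_le_add (add_le_add (le_abs_mul _ _) ((le_abs_mul _ _).trans (by gcongr)))
            (le_abs_mul _ _)
      _ = _ := by rw [mul_one]
  rw [abs_mul]
  rcases le_or_gt |v 2| 1 with hv₂ | hv₂
  · exact mul_le_one₀ (by linarith [abs_nonneg (c 1), abs_nonneg (c 2)]) (abs_nonneg _) hv₂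
  · -- `hpair`, `|v 0| ≤ 2 - |v 2|` and `|c 0| + |c 1| + |c 2| ≤ 1` give
    -- `(|v 2| - 1) * (|c 2| - |c 0|) ≥ 0`
    have : |c 0| ≤ |c 2| := by nlinarith [abs_nonneg (c 0), abs_nonneg (c 1), abs_nonneg (c 2)]
    calc |c 0| * |v 2| ≤ |c 2| * 2 :=
          mul_le_mul this (by linarith [abs_nonneg (v 0)]) (abs_nonneg _) (abs_nonneg _)
      _ ≤ 1 := by linarith

section NormedSpace

variable {X : Type*} [NormedAddCommGroup X] [NormedSpace ℝ X] {e : X ≃ₗ[ℝ] (Fin 3 → ℝ)}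

theorem abs_dotProduct_le_norm
    (hball : closedBall (0 : X) 1 = e ⁻¹' convexHull ℝ biPyramidVerts)
    {c : Fin 3 → ℝ} (hc : dualNorm c ≤ 1) (x : X) : |c ⬝ᵥ e x| ≤ ‖x‖ :=
  abs_apply_le_norm_of_forall_mem hball (φ := dotProductEquiv ℝ (Fin 3) c)
    ((forall_abs_dotProduct_le_one_iff c).mpr hc) x

theorem exists_strongDual_eq_dotProduct
    (hball : closedBall (0 : X) 1 = e ⁻¹' convexHull ℝ biPyramidVerts)
    {c : Fin 3 → ℝ} (hc : dualNorm c ≤ 1) :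
    ∃ f : StrongDual ℝ X, ‖f‖ ≤ 1 ∧ ∀ x, f x = c ⬝ᵥ e x :=
  exists_strongDual_norm_le_one hball (φ := dotProductEquiv ℝ (Fin 3) c)
    ((forall_abs_dotProduct_le_one_iff c).mpr hc)

theorem exists_dotProduct_eq_strongDual
    (hball : closedBall (0 : X) 1 = e ⁻¹' convexHull ℝ biPyramidVerts)
    {f : StrongDual ℝ X} (hf : ‖f‖ ≤ 1) :
    ∃ c : Fin 3 → ℝ, dualNorm c ≤ 1 ∧ ∀ x, f x = c ⬝ᵥ e x := by
  set c := (dotProductEquiv ℝ (Fin 3)).symm (f.toLinearMap ∘ₗ e.symm.toLinearMap)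
  have hc (w : Fin 3 → ℝ) : c ⬝ᵥ w = f (e.symm w) :=
    LinearMap.congr_fun ((dotProductEquiv ℝ (Fin 3)).apply_symm_apply _) w
  refine ⟨c, (forall_abs_dotProduct_le_one_iff c).mp fun w hw ↦ ?_, fun x ↦ ?_⟩
  · rw [hc]
    exact abs_apply_symm_le_one hball hf hw
  · rw [hc, e.symm_apply_apply]

theorem norm_symm_one_zero_zero
    (hball : closedBall (0 : X) 1 = e ⁻¹' convexHull ℝ biPyramidVerts) :
    ‖e.symm ![1, 0, 0]‖ = 1 := by
  refine le_antisymm (norm_symm_le_one_of_mem_convexHull hball one_zero_zero_mem_convexHull) ?_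
  simpa [dotProduct, Fin.sum_univ_three] using
    abs_dotProduct_le_norm hball (c := ![1, 0, 0])
      (by norm_num [dualNorm, cons_val_two, vecHead, vecTail]) (e.symm ![1, 0, 0])

theorem norm_symm_zero_zero_two
    (hball : closedBall (0 : X) 1 = e ⁻¹' convexHull ℝ biPyramidVerts) :
    ‖e.symm ![0, 0, 2]‖ = 1 := by
  refine le_antisymm (norm_symm_le_one_of_mem_convexHull hball
    (subset_convexHull ℝ _ (by simp [biPyramidVerts]))) ?_
  simpa [dotProduct, Fin.sum_univ_three] using
    abs_dotProduct_le_norm hball (c := ![0, 0, 1 / 2])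
      (by norm_num [dualNorm, cons_val_two, vecHead, vecTail]) (e.symm ![0, 0, 2])

variable {T : X →L[ℝ] X}

theorem apply_eq_smul (hT : ∀ x : X, e (T x) = ![e x 2 / 2, 0, 0]) (x : X) :
    T x = (e x 2 / 2) • e.symm ![1, 0, 0] := by
  apply e.injective
  rw [hT, map_smul, e.apply_symm_apply]
  ext i
  fin_cases i <;> simp

theorem opNorm_eq_one (hball : closedBall (0 : X) 1 = e ⁻¹' convexHull ℝ biPyramidVerts)
    (hT : ∀ x : X, e (T x) = ![e x 2 / 2, 0, 0]) : ‖T‖ = 1 := by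
  refine le_antisymm (T.opNorm_le_bound zero_le_one fun x ↦ ?_) ?_
  · have h₂ : |e x 2| / 2 ≤ ‖x‖ := by
      simpa [dotProduct, Fin.sum_univ_three, abs_mul, div_eq_inv_mul] using
        abs_dotProduct_le_norm hball (c := ![0, 0, 1 / 2])
          (by norm_num [dualNorm, cons_val_two, vecHead, vecTail]) x
    rw [apply_eq_smul hT, norm_smul, norm_symm_one_zero_zero hball, Real.norm_eq_abs, abs_div,
      abs_two, mul_one, one_mul]
    exact h₂
  · have hx₀ := norm_symm_zero_zero_two hball
    have hTx₀ : T (e.symm ![0, 0, 2]) = e.symm ![1, 0, 0] := by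
      rw [apply_eq_smul hT, e.apply_symm_apply]
      simp
    simpa [hx₀, hTx₀, norm_symm_one_zero_zero hball] using T.le_opNorm (e.symm ![0, 0, 2])

theorem nrad_eq_half (hball : closedBall (0 : X) 1 = e ⁻¹' convexHull ℝ biPyramidVerts)
    (hT : ∀ x : X, e (T x) = ![e x 2 / 2, 0, 0]) : nrad T = 1 / 2 := by
  refine IsGreatest.csSup_eq ⟨?_, ?_⟩
  · obtain ⟨f, hf, hfe⟩ := exists_strongDual_eq_dotProduct hball (c := ![1 / 2, 0, 1 / 2])
      (by norm_num [dualNorm, cons_val_two, vecHead, vecTail])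
    have hx₀ := norm_symm_zero_zero_two hball
    have hfx₀ : f (e.symm ![0, 0, 2]) = 1 := by
      simp [hfe, dotProduct, Fin.sum_univ_three]
    refine ⟨e.symm ![0, 0, 2], f, hx₀, le_antisymm hf ?_, hfx₀, ?_⟩
    · simpa [hfx₀, hx₀] using f.le_opNorm (e.symm ![0, 0, 2])
    · simp [hfe, hT, dotProduct, Fin.sum_univ_three]
  · rintro r ⟨x, g, hx, hg, hgx, rfl⟩
    obtain ⟨c, hc, hge⟩ := exists_dotProduct_eq_strongDual hball hg.le
    have hv : e x ∈ convexHull ℝ biPyramidVerts := by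
      rw [← mem_preimage, ← hball, mem_closedBall_zero_iff, hx]
    have hpair := abs_mul_le_one_of_dotProduct_eq_one hc hv (hge x ▸ hgx)
    calc |g (T x)| = |c 0 * e x 2| / 2 := by
          simp [hge, hT, dotProduct, Fin.sum_univ_three, abs_mul, abs_div, mul_div_assoc]
      _ ≤ 1 / 2 := by linarith

end NormedSpace

end BiPyramid

theorem stmt_12 {X : Type*} [NormedAddCommGroup X] [NormedSpace ℝ X]
    (e : X ≃ₗ[ℝ] (Fin 3 → ℝ))
    (hball : closedBall (0 : X) 1 = e ⁻¹' (convexHull ℝ biPyramidVerts))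
    (T : X →L[ℝ] X)
    (hT : ∀ x : X, e (T x) = ![e x 2 / 2, 0, 0]) :
    ‖T‖ = 1 ∧ nrad T = 1 / 2 :=
  ⟨BiPyramid.opNorm_eq_one hball hT, BiPyramid.nrad_eq_half hball hT⟩
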